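/- The strength relation on the color-1 labels Λ₁ = {EE, MM, MY0, MY1} with respect to the color-1 constraint ℰ₁ is exactly reflexivity together with the pairs EE ≤ MY0, EE ≤ MY1, EE ≤ MM, MY0 ≤ MM, MY1 ≤ MM; in particular MY0 and MY1 are incomparable and no label other than MM itself is ≥ MM. -/
import Mathlib


/-- The four color-1 labels Λ₁ = {EE, MM, MY0, MY1}. -/
inductive Lab1 where
  | EE : Lab1
  | MM : Lab1
  | MY0 : Lab1
  | MY1 : Lab1
deriving DecidableEq

open Lab1

/-- The two condensed configurations defining the color-1 constraint. -/
def cond1 : List (Fin 3 → Set Lab1) :=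
  [ ![{EE, MM, MY0, MY1}, {MM}, {MM, MY0}],
    ![{MM, MY0}, {MM, MY0}, {MM, MY1}] ]

/-- The color-1 constraint ℰ₁: the family of size-3 multisets represented by the two
condensed configurations. -/
def E1 : Set (Multiset Lab1) :=
  {C | ∃ D ∈ cond1, ∃ l₁ ∈ D 0, ∃ l₂ ∈ D 1, ∃ l₃ ∈ D 2,
    C = ({l₁, l₂, l₃} : Multiset Lab1)}

/-- `l'` is at least as strong as `l` w.r.t. ℰ₁: for every multiset `{l, l₂, l₃} ∈ ℰ₁`,
also `{l', l₂, l₃} ∈ ℰ₁`. -/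
def stronger1 (l l' : Lab1) : Prop :=
  ∀ l₂ l₃ : Lab1, ({l, l₂, l₃} : Multiset Lab1) ∈ E1 → ({l', l₂, l₃} : Multiset Lab1) ∈ E1

instance : Fintype Lab1 where
  elems := {EE, MM, MY0, MY1}
  complete := by intro x; cases x <;> decide

def cond1L : List (Fin 3 → List Lab1) :=
  [ ![[EE, MM, MY0, MY1], [MM], [MM, MY0]],
    ![[MM, MY0], [MM, MY0], [MM, MY1]] ]

lemma mem_E1 (C : Multiset Lab1) :
    C ∈ E1 ↔ ∃ D ∈ cond1L, ∃ l₁ ∈ D 0, ∃ l₂ ∈ D 1, ∃ l₃ ∈ D 2,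
      C = ({l₁, l₂, l₃} : Multiset Lab1) := by
  simp [E1, cond1, cond1L]

/-- **The strength relation on the color-1 labels** is exactly reflexivity together with
`EE ≤ MY0`, `EE ≤ MY1`, `EE ≤ MM`, `MY0 ≤ MM`, `MY1 ≤ MM`; in particular `MY0` and `MY1`
are incomparable and no label other than `MM` itself is `≥ MM`. -/
theorem color1_strength (l l' : Lab1) :
    stronger1 l l' ↔
      (l = l' ∨ (l = EE ∧ l' = MY0) ∨ (l = EE ∧ l' = MY1) ∨ (l = EE ∧ l' = MM) ∨
        (l = MY0 ∧ l' = MM) ∨ (l = MY1 ∧ l' = MM)) := by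
  simp only [stronger1, mem_E1]
  cases l <;> cases l' <;> decide
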